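/- Downward closure lemma: for k ≥ 2, L_k ⊆ C_k, where L_k is the set of frequent itemsets of size k and C_k = { a ∪ {b} : a ∈ L_{k-1}, b ∈ ⋃ L_{k-1}, b ∉ a } is the set of candidate itemsets obtained by extending frequent itemsets of size k−1 by a single element occurring in some frequent itemset of size k−1. -/

import Mathlib

/-! Support is antitone, so deleting one element of a frequent `k`-itemset `I` leaves a frequent
`(k-1)`-itemset. For distinct `b, b' ∈ I`, `I = insert b (I.erase b)`, and
`b` occurs in the frequent itemset `I.erase b'`. -/

/-- Support of an itemset `I` in a basket set `D`. -/
noncomputable def supp {α : Type*} [DecidableEq α] (D : Finset (Finset α)) (I : Finset α) : ℝ :=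
  (D.filter (fun t => I ⊆ t)).card / D.card

/-- The set of frequent itemsets of size `k`. -/
noncomputable def L {α : Type*} [DecidableEq α] (D : Finset (Finset α)) (rf : ℝ) (k : ℕ) :
    Set (Finset α) :=
  {I | I.card = k ∧ rf ≤ supp D I}

section

variable {α : Type*} [DecidableEq α] (D : Finset (Finset α))

theorem supp_antitone : Antitone (supp D) := fun _ _ hIJ => by
  unfold supp
  gcongr

theorem erase_mem_L {rf : ℝ} {k : ℕ} {I : Finset α} (hI : I ∈ L D rf k) {b : α} (hb : b ∈ I) :
    I.erase b ∈ L D rf (k - 1) :=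
  ⟨by rw [Finset.card_erase_of_mem hb, hI.1],
    hI.2.trans (supp_antitone D (Finset.erase_subset b I))⟩

end

theorem downward_closure_general {α : Type*} [DecidableEq α] (D : Finset (Finset α))
    (rf : ℝ) (k : ℕ) (hk : 2 ≤ k) :
    L D rf k ⊆ {c : Finset α | ∃ a ∈ L D rf (k - 1), ∃ b,
      (∃ J ∈ L D rf (k - 1), b ∈ J) ∧ b ∉ a ∧ c = insert b a} := by
  intro I hI
  obtain ⟨b, hb, b', hb', hne⟩ := Finset.one_lt_card.mp (hI.1 ▸ hk : 1 < I.card)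
  exact ⟨I.erase b, erase_mem_L D hI hb, b,
    ⟨I.erase b', erase_mem_L D hI hb', Finset.mem_erase.mpr ⟨hne, hb⟩⟩,
    Finset.notMem_erase b I, (Finset.insert_erase hb).symm⟩

/-- Downward closure lemma: every frequent itemset of size `k ≥ 2` arises as a frequent
itemset of size `k-1` extended by one element occurring in some frequent itemset of
size `k-1`. -/
theorem downward_closure {α : Type*} [DecidableEq α] (D : Finset (Finset α))
    (hD : D.Nonempty) (rf : ℝ) (k : ℕ) (hk : 2 ≤ k) :
    L D rf k ⊆ {c : Finset α | ∃ a ∈ L D rf (k - 1), ∃ b,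
      (∃ J ∈ L D rf (k - 1), b ∈ J) ∧ b ∉ a ∧ c = insert b a} :=
  downward_closure_general D rf k hk
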